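/- Let G be a group generated by a finite set A, let H ≤ G, and let k ≥ 0. Then the language L_{H,k} of all words w over A such that w represents an element of H and every prefix of w represents an element within distance k of H is a regular language. -/

import Mathlib

/-!
By Myhill–Nerode it suffices that `L_{H,k}` has finitely many left quotients. The quotient by a
word `u` is empty unless every prefix of `u` is `k`-close to `H`; otherwise it is determined by
the element `ū` that `u` represents, and in fact only by the right coset `Hū`, since both `H` and
its `k`-neighbourhood are unions of right cosets of `H`. A `k`-close element lies in `H v̄⁻¹` for
some word `v` of length at most `k`, so only finitely many cosets occur.
-/

open Classical

/-- Evaluation in `G` of a word over the alphabet `A`. -/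
def wordEval {G : Type} [Group G] {A : Type} (π : A → G) (w : List A) : G :=
  (w.map π).prod

/-- `π : A → G` generates `G` (positive words suffice; the generating set is
assumed symmetric, see `SymmetricGen`). -/
def Generates {G : Type} [Group G] {A : Type} (π : A → G) : Prop :=
  ∀ g : G, ∃ w : List A, wordEval π w = g

/-- The generating set is symmetric: `A = A⁻¹`. -/
def SymmetricGen {G : Type} [Group G] {A : Type} (π : A → G) : Prop :=
  ∀ a : A, ∃ b : A, π b = (π a)⁻¹

/-- The word length of `g` with respect to the generating map `π`. -/
noncomputable def wordLength {G : Type} [Group G] {A : Type} (π : A → G) (g : G) : ℕ :=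
  sInf {n : ℕ | ∃ w : List A, w.length = n ∧ wordEval π w = g}

/-- The word metric on `G` induced by the generating map `π`. -/
noncomputable def wordDist {G : Type} [Group G] {A : Type} (π : A → G) (g h : G) : ℕ :=
  wordLength π (g⁻¹ * h)

theorem List.prefix_append_iff {α : Type*} {w u v : List α} :
    w <+: u ++ v ↔ w <+: u ∨ ∃ v', v' <+: v ∧ w = u ++ v' := by
  constructor
  · rintro ⟨t, ht⟩
    rcases List.append_eq_append_iff.1 ht with ⟨a', rfl, -⟩ | ⟨c', rfl, rfl⟩
    · exact .inl (List.prefix_append w a')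
    · exact .inr ⟨c', List.prefix_append c' t, rfl⟩
  · rintro (h | ⟨v', hv', rfl⟩)
    · exact h.trans (List.prefix_append u v)
    · exact (List.prefix_append_right_inj u).2 hv'

theorem List.forall_prefix_append_iff {α : Type*} {p : List α → Prop} {u v : List α} :
    (∀ w, w <+: u ++ v → p w) ↔ (∀ w, w <+: u → p w) ∧ ∀ v', v' <+: v → p (u ++ v') := by
  simp only [List.prefix_append_iff, or_imp, forall_and, exists_imp, and_imp]
  exact and_congr_right' ⟨fun h v' hv' => h _ v' hv' rfl, fun h _ v' hv' hw => hw ▸ h v' hv'⟩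

section StayLanguage

variable {G : Type} [Group G] {A : Type} (π : A → G)

@[simp]
theorem wordEval_append (u v : List A) : wordEval π (u ++ v) = wordEval π u * wordEval π v := by
  simp [wordEval]

def stayLanguageFrom (S P : Set G) (g : G) : Language A :=
  {w | g * wordEval π w ∈ S ∧ ∀ u, u <+: w → g * wordEval π u ∈ P}

variable {π}

theorem mem_stayLanguageFrom {S P : Set G} {g : G} {w : List A} :
    w ∈ stayLanguageFrom π S P g ↔
      g * wordEval π w ∈ S ∧ ∀ u, u <+: w → g * wordEval π u ∈ P :=
  Iff.rfl

theorem leftQuotient_stayLanguageFrom {S P : Set G} {g : G} (u : List A) :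
    (stayLanguageFrom π S P g).leftQuotient u =
      if ∀ u', u' <+: u → g * wordEval π u' ∈ P then stayLanguageFrom π S P (g * wordEval π u)
      else 0 := by
  ext v
  rw [Language.mem_leftQuotient]
  split_ifs with hu
  · simp only [mem_stayLanguageFrom, List.forall_prefix_append_iff, wordEval_append, mul_assoc,
      iff_true_intro hu, true_and]
  · simp [mem_stayLanguageFrom, List.forall_prefix_append_iff, hu, Language.notMem_zero]

theorem stayLanguageFrom_mul_left {S P : Set G} {c : G} (hS : ∀ x, c * x ∈ S ↔ x ∈ S)
    (hP : ∀ x, c * x ∈ P ↔ x ∈ P) (g : G) :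
    stayLanguageFrom π S P (c * g) = stayLanguageFrom π S P g := by
  ext w
  simp only [mem_stayLanguageFrom, mul_assoc, hS, hP]

theorem isRegular_stayLanguageFrom_one {S P : Set G}
    (hfin : (stayLanguageFrom π S P '' P).Finite) : (stayLanguageFrom π S P 1).IsRegular := by
  refine .of_finite_range_leftQuotient ((hfin.insert 0).subset ?_)
  rintro _ ⟨u, rfl⟩
  rw [leftQuotient_stayLanguageFrom]
  split_ifs with hu
  · exact .inr ⟨_, by simpa using hu u (List.prefix_refl u), by rw [one_mul]⟩
  · exact .inl rfl

open Pointwise in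
theorem finite_image_stayLanguageFrom {S P C F : Set G}
    (hS : ∀ c ∈ C, ∀ x, c * x ∈ S ↔ x ∈ S) (hP : ∀ c ∈ C, ∀ x, c * x ∈ P ↔ x ∈ P)
    (hF : F.Finite) (hPF : P ⊆ C * F) : (stayLanguageFrom π S P '' P).Finite := by
  refine (hF.image (stayLanguageFrom π S P)).subset ?_
  rintro _ ⟨_, hg, rfl⟩
  obtain ⟨c, hc, f, hf, rfl⟩ := hPF hg
  exact ⟨f, hf, (stayLanguageFrom_mul_left (hS c hc) (hP c hc) f).symm⟩

end StayLanguage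

section Neighbourhood

variable {G : Type} [Group G] {A : Type} {π : A → G}

def wordCThickening (π : A → G) (H : Subgroup G) (k : ℕ) : Set G :=
  {g | ∃ h ∈ H, wordDist π g h ≤ k}

theorem mul_mem_wordCThickening_iff {H : Subgroup G} {k : ℕ} {c : G} (hc : c ∈ H) (x : G) :
    c * x ∈ wordCThickening π H k ↔ x ∈ wordCThickening π H k := by
  constructor
  · rintro ⟨h, hh, hd⟩
    refine ⟨c⁻¹ * h, H.mul_mem (H.inv_mem hc) hh, ?_⟩
    rwa [wordDist, mul_inv_rev, mul_assoc] at hd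
  · rintro ⟨h, hh, hd⟩
    refine ⟨c * h, H.mul_mem hc hh, ?_⟩
    rwa [wordDist, mul_inv_rev, mul_assoc, inv_mul_cancel_left]

theorem exists_length_eq_wordLength (hgen : Generates π) (g : G) :
    ∃ w : List A, w.length = wordLength π g ∧ wordEval π w = g := by
  obtain ⟨w, hw⟩ := hgen g
  exact Nat.sInf_mem (s := {n | ∃ w : List A, w.length = n ∧ wordEval π w = g}) ⟨_, w, rfl, hw⟩

open Pointwise in
theorem wordCThickening_subset_mul (hgen : Generates π) (H : Subgroup G) (k : ℕ) :
    wordCThickening π H k ⊆ (H : Set G) * ((fun w => (wordEval π w)⁻¹) '' {w | w.length ≤ k}) := by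
  rintro g ⟨h, hh, hd⟩
  obtain ⟨w, hw, hwg⟩ := exists_length_eq_wordLength hgen (g⁻¹ * h)
  refine ⟨h, hh, _, ⟨w, hw.trans_le hd, rfl⟩, ?_⟩
  show h * (wordEval π w)⁻¹ = g
  rw [hwg, mul_inv_rev, inv_inv, mul_inv_cancel_left]

end Neighbourhood

/-- The language `L_{H,k}` of all words over `A` representing
elements of `H` all of whose prefixes stay within distance `k` of `H` is regular. -/
theorem regular_L_H_k {G : Type} [Group G] {A : Type} [Fintype A]
    (π : A → G) (hgen : Generates π) (H : Subgroup G) (k : ℕ) :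
    Language.IsRegular ({w : List A | wordEval π w ∈ H ∧
      ∀ u : List A, u <+: w →
        ∃ h ∈ H, wordLength π ((wordEval π u)⁻¹ * h) ≤ k} : Language A) := by
  convert isRegular_stayLanguageFrom_one <|
    finite_image_stayLanguageFrom (π := π) (fun _ hc _ => H.mul_mem_cancel_left hc)
      (fun _ hc => mul_mem_wordCThickening_iff hc) ((List.finite_length_le A k).image _)
      (wordCThickening_subset_mul hgen H k) using 1
  simp only [stayLanguageFrom, one_mul]
  rfl
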